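/- arXiv:2605.12253 — 2 statements merged into one kernel-verified Lean document; each statement's English description precedes it below -/
import Mathlib

section
/- Let G be a simple graph containing no induced cycle of length 3 and no induced cycle of length 5. Fix a vertex t of G, and let V_o be the set of vertices v such that v ≠ t, v is not adjacent to t, and v has at least one neighbor in N(t). Then V_o is an independent set. -/
open SimpleGraph

private lemma mkEmb {n : ℕ} {V : Type*} (G : SimpleGraph V) (f : Fin n → V)
    (hinj : Function.Injective f)
    (h : ∀ i j, G.Adj (f i) (f j) ↔ (cycleGraph n).Adj i j) :
    Nonempty (cycleGraph n ↪g G) :=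
  ⟨⟨⟨f, hinj⟩, h _ _⟩⟩

/-- In a {C3,C5}-free graph, for any vertex t, the set of vertices at distance
exactly two from t (non-neighbors of t having a neighbor in N(t)) is independent. -/
theorem stmt_1 {V : Type*} (G : SimpleGraph V)
    (hC3 : IsEmpty (SimpleGraph.cycleGraph 3 ↪g G))
    (hC5 : IsEmpty (SimpleGraph.cycleGraph 5 ↪g G)) (t : V) :
    ∀ a ∈ {v : V | v ≠ t ∧ ¬ G.Adj t v ∧ ∃ g ∈ G.neighborSet t, G.Adj v g},
    ∀ b ∈ {v : V | v ≠ t ∧ ¬ G.Adj t v ∧ ∃ g ∈ G.neighborSet t, G.Adj v g},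
      ¬ G.Adj a b := by
  -- triangle-free
  have tri : ∀ x y z : V, G.Adj x y → G.Adj y z → G.Adj x z → False := by
    intro x y z hxy hyz hxz
    apply hC3.elim'
    refine Nonempty.some (mkEmb G ![x, y, z] ?_ ?_)
    · intro i j hij
      fin_cases i <;> fin_cases j <;> simp_all <;>
        first
        | rfl
        | (exact absurd hij (by simp [G.ne_of_adj hxy, G.ne_of_adj hyz,
            G.ne_of_adj hxz, (G.ne_of_adj hxy).symm, (G.ne_of_adj hyz).symm,
            (G.ne_of_adj hxz).symm]))
    · intro i j
      fin_cases i <;> fin_cases j <;>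
        simp [cycleGraph_adj', hxy, hyz, hxz, hxy.symm, hyz.symm, hxz.symm,
          G.irrefl] <;> decide
  rintro a ⟨hat, hta, g, hg, hag⟩ b ⟨hbt, htb, h, hh, hbh⟩ hab
  simp only [mem_neighborSet] at hg hh
  by_cases hgh : g = h
  · subst hgh
    exact tri a b g hab hbh hag
  -- distinctness
  have hga : g ≠ a := fun e => hta (e ▸ hg)
  have hgb : g ≠ b := fun e => htb (e ▸ hg)
  have hha : h ≠ a := fun e => hta (e ▸ hh)
  have hhb : h ≠ b := fun e => htb (e ▸ hh)
  -- non-edges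
  have ngb : ¬ G.Adj g b := fun e => tri g a b hag.symm hab e
  have nah : ¬ G.Adj a h := fun e => tri a b h hab hbh e
  have ngh : ¬ G.Adj g h := fun e => tri t g h hg e hh
  have nat : ¬ G.Adj a t := fun e => hta e.symm
  have nbt : ¬ G.Adj b t := fun e => htb e.symm
  have nbg : ¬ G.Adj b g := fun e => ngb e.symm
  have nha : ¬ G.Adj h a := fun e => nah e.symm
  have nhg : ¬ G.Adj h g := fun e => ngh e.symm
  apply hC5.elim'
  refine Nonempty.some (mkEmb G ![t, g, a, b, h] ?_ ?_)
  · intro i j hij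
    fin_cases i <;> fin_cases j <;> simp_all <;>
      first
      | rfl
      | (exfalso; simp_all [eq_comm])
  · intro i j
    fin_cases i <;> fin_cases j <;>
      simp [cycleGraph_adj', hg, hag, hag.symm, hab, hab.symm, hbh, hbh.symm,
        hh, hh.symm, hg.symm, hta, htb, ngb, nah, ngh, G.irrefl,
        nat, nbt, nbg, nha, nhg] <;> decide
end

section
/- Let G be a simple graph, let v be a vertex, and let x, y be vertices distinct from v with v adjacent to neither x nor y and with x adjacent to y in G. Suppose P is a shortest path from x to y in the complement of G all of whose internal vertices are neighbors of v in G. Then the vertex set of P together with v induces in G a subgraph isomorphic to the complement of a cycle of length at least 4. -/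
open SimpleGraph Walk

namespace StmtAux

variable {V : Type*} {G : SimpleGraph V}

lemma length_drop {u v : V} (p : G.Walk u v) (n : ℕ) :
    (p.drop n).length = p.length - n := by
  induction p generalizing n with
  | nil => cases n <;> simp [Walk.drop, getVert_of_length_le]
  | cons h q ih =>
    cases n with
    | zero => simp [Walk.drop]
    | succ n => simpa [Walk.drop] using ih n

lemma support_drop_subset {u v : V} (p : G.Walk u v) (n : ℕ) :
    ∀ z ∈ (p.drop n).support, z ∈ p.support := by
  induction p generalizing n with
  | nil => cases n <;> simp [Walk.drop, getVert_of_length_le]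
  | cons h q ih =>
    cases n with
    | zero => simp [Walk.drop]
    | succ n =>
      intro z hz
      simp only [Walk.drop, support_copy] at hz
      simp only [support_cons, List.mem_cons]
      exact Or.inr (ih n z hz)

/-- take the first `n` darts of a walk -/
def myTake {u v : V} (p : G.Walk u v) (n : ℕ) (hn : n ≤ p.length) :
    G.Walk u (p.getVert n) :=
  (p.reverse.drop (p.length - n)).reverse.copy rfl
    (by rw [getVert_reverse]; congr 1; omega)

lemma length_myTake {u v : V} (p : G.Walk u v) (n : ℕ) (hn : n ≤ p.length) :
    (myTake p n hn).length = n := by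
  simp [myTake, length_drop]; omega

lemma support_myTake_subset {u v : V} (p : G.Walk u v) (n : ℕ) (hn : n ≤ p.length)
    {z : V} (hz : z ∈ (myTake p n hn).support) : z ∈ p.support := by
  simp only [myTake, support_copy, support_reverse, List.mem_reverse] at hz
  have := support_drop_subset p.reverse (p.length - n) z hz
  rwa [support_reverse, List.mem_reverse] at this

lemma getVert_inj {u v : V} {p : G.Walk u v} (hp : p.IsPath) :
    ∀ i j, i ≤ p.length → j ≤ p.length → p.getVert i = p.getVert j → i = j := by
  induction p with
  | nil => intro i j hi hj _; simp only [length_nil, Nat.le_zero] at hi hj; omega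
  | @cons a b c h q ih =>
    rw [cons_isPath_iff] at hp
    intro i j hi hj hij
    simp only [length_cons] at hi hj
    match i, j with
    | 0, 0 => rfl
    | 0, j + 1 =>
      exfalso
      rw [getVert_cons_succ, getVert_zero] at hij
      exact hp.2 (mem_support_iff_exists_getVert.2 ⟨j, hij.symm, by omega⟩)
    | i + 1, 0 =>
      exfalso
      rw [getVert_cons_succ, getVert_zero] at hij
      exact hp.2 (mem_support_iff_exists_getVert.2 ⟨i, hij, by omega⟩)
    | i + 1, j + 1 =>
      rw [getVert_cons_succ, getVert_cons_succ] at hij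
      have := ih hp.1 i j (by omega) (by omega) hij
      omega

lemma cycle_adj_iff {k : ℕ} (i j : Fin (k + 2)) :
    (cycleGraph (k + 2)).Adj i j ↔
      ((i : ℕ) + 1) % (k + 2) = (j : ℕ) ∨ ((j : ℕ) + 1) % (k + 2) = (i : ℕ) := by
  rw [cycleGraph_adj]
  have h1 : ∀ a b : Fin (k + 2), a - b = 1 ↔ ((b : ℕ) + 1) % (k + 2) = (a : ℕ) := by
    intro a b
    rw [sub_eq_iff_eq_add, Fin.ext_iff, Fin.add_def]
    simp [Fin.val_one, Nat.add_comm]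
    constructor
    · intro h; omega
    · intro h; omega
  rw [h1, h1]
  tauto

end StmtAux

/-- Let v, x, y be vertices with v adjacent to neither x nor y, x adjacent to y,
and let P be a shortest path from x to y in the complement of G among paths whose
internal vertices are neighbors of v.  Then the vertices of P together with v
induce a subgraph of G isomorphic to the complement of a cycle of length ≥ 4. -/
theorem stmt_8 {V : Type*} (G : SimpleGraph V) (v x y : V)
    (hx : x ≠ v) (hy : y ≠ v) (hvx : ¬ G.Adj v x) (hvy : ¬ G.Adj v y)
    (hxy : G.Adj x y) (P : Gᶜ.Walk x y) (hP : P.IsPath)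
    (hint : ∀ u ∈ P.support, u ≠ x → u ≠ y → u ∈ G.neighborSet v)
    (hmin : ∀ Q : Gᶜ.Walk x y, Q.IsPath →
      (∀ u ∈ Q.support, u ≠ x → u ≠ y → u ∈ G.neighborSet v) →
      P.length ≤ Q.length) :
    ∃ m : ℕ, 4 ≤ m ∧
      Nonempty ((G.induce ({v} ∪ {u | u ∈ P.support} : Set V)) ≃g
        (SimpleGraph.cycleGraph m)ᶜ) := by
  classical
  set n := P.length with hn
  have hget0 : P.getVert 0 = x := P.getVert_zero
  have hgetn : P.getVert n = y := P.getVert_length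
  -- length is at least 2
  have hn0 : n ≠ 0 := by
    intro h
    have h2 : P.getVert 0 = y := P.getVert_of_length_le (by omega)
    rw [hget0] at h2
    exact hxy.ne h2
  have hn1 : n ≠ 1 := by
    intro h
    have h2 : Gᶜ.Adj (P.getVert 0) (P.getVert 1) := P.adj_getVert_succ (by omega)
    rw [hget0, ← h, hgetn] at h2
    exact (G.compl_adj x y).1 h2 |>.2 hxy
  have hn2 : 2 ≤ n := by omega
  have inj := StmtAux.getVert_inj hP
  -- shortcut argument: no chords in the complement
  have hshort : ∀ a b, a + 2 ≤ b → b ≤ n → ¬ Gᶜ.Adj (P.getVert a) (P.getVert b) := by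
    intro a b hab hb hadj
    have ha : a ≤ P.length := by omega
    set Q0 : Gᶜ.Walk x y :=
      (StmtAux.myTake P a ha).append (Walk.cons hadj (P.drop b)) with hQ0
    have hlen : Q0.length = a + 1 + (n - b) := by
      rw [hQ0, Walk.length_append, Walk.length_cons, StmtAux.length_myTake,
        StmtAux.length_drop]
      omega
    have hsub : ∀ z ∈ Q0.support, z ∈ P.support := by
      intro z hz
      rw [hQ0, Walk.mem_support_append_iff] at hz
      rcases hz with hz | hz
      · exact StmtAux.support_myTake_subset P a ha hz
      · rw [Walk.support_cons, List.mem_cons] at hz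
        rcases hz with rfl | hz
        · exact Walk.mem_support_iff_exists_getVert.2 ⟨a, rfl, by omega⟩
        · exact StmtAux.support_drop_subset P b z hz
    have h1 := hmin Q0.bypass Q0.bypass_isPath (fun u hu hux huy =>
      hint u (hsub u (Q0.support_bypass_subset hu)) hux huy)
    have h2 := Q0.length_bypass_le
    omega
  -- chords of the path are edges of G
  have hGadj : ∀ a b, b ≤ n → a + 2 ≤ b → G.Adj (P.getVert a) (P.getVert b) := by
    intro a b hb hab
    by_contra hne
    have hne2 : P.getVert a ≠ P.getVert b := by
      intro h
      have := inj a b (by omega) (by omega) h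
      omega
    exact hshort a b hab hb ((G.compl_adj _ _).2 ⟨hne2, hne⟩)
  -- consecutive vertices of the path are non-edges of G
  have hNadj : ∀ a, a < n → ¬ G.Adj (P.getVert a) (P.getVert (a + 1)) := by
    intro a han
    exact ((G.compl_adj _ _).1 (P.adj_getVert_succ han)).2
  -- v is not on the path
  have hvsup : v ∉ P.support := by
    intro hv
    have h1 : v ≠ x := fun h => hx h.symm
    have h2 : v ≠ y := fun h => hy h.symm
    exact G.irrefl (hint v hv h1 h2)
  -- v is adjacent to internal vertices
  have hAdjv : ∀ k, 0 < k → k < n → G.Adj v (P.getVert k) := by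
    intro k hk0 hkn
    have hmem : P.getVert k ∈ P.support :=
      Walk.mem_support_iff_exists_getVert.2 ⟨k, rfl, by omega⟩
    have hkx : P.getVert k ≠ x := by
      intro h
      have := inj k 0 (by omega) (by omega) (h.trans hget0.symm)
      omega
    have hky : P.getVert k ≠ y := by
      intro h
      have := inj k n (by omega) le_rfl (h.trans hgetn.symm)
      omega
    exact hint _ hmem hkx hky
  -- the vertex set
  refine ⟨n + 2, by omega, ?_⟩
  set S : Set V := {v} ∪ {u | u ∈ P.support} with hS
  have hmem : ∀ i : Fin (n + 2),
      (if (i : ℕ) = 0 then v else P.getVert ((i : ℕ) - 1)) ∈ S := by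
    intro i
    split_ifs with h
    · exact Or.inl rfl
    · exact Or.inr (Walk.mem_support_iff_exists_getVert.2
        ⟨(i : ℕ) - 1, rfl, by have := i.isLt; omega⟩)
  -- the key adjacency computation
  have key : ∀ i j : Fin (n + 2),
      (G.Adj (if (i : ℕ) = 0 then v else P.getVert ((i : ℕ) - 1))
        (if (j : ℕ) = 0 then v else P.getVert ((j : ℕ) - 1)) ↔
      ((SimpleGraph.cycleGraph (n + 2))ᶜ).Adj i j) := by
    have main : ∀ i j : Fin (n + 2), (i : ℕ) < (j : ℕ) →
        (G.Adj (if (i : ℕ) = 0 then v else P.getVert ((i : ℕ) - 1))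
          (if (j : ℕ) = 0 then v else P.getVert ((j : ℕ) - 1)) ↔
        ((SimpleGraph.cycleGraph (n + 2))ᶜ).Adj i j) := by
      intro i j hij
      have hjlt : (j : ℕ) < n + 2 := j.isLt
      have hine : i ≠ j := by
        intro h; rw [h] at hij; omega
      rw [compl_adj, StmtAux.cycle_adj_iff]
      simp only [hine, ne_eq, not_false_eq_true, true_and]
      have hj0 : ¬ ((j : ℕ) = 0) := by omega
      rw [if_neg hj0]
      obtain ⟨c, hc⟩ : ∃ c, (j : ℕ) = c + 1 := ⟨(j : ℕ) - 1, by omega⟩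
      have hcn : c ≤ n := by omega
      have hjc : (j : ℕ) - 1 = c := by omega
      rw [hjc]
      rcases Nat.eq_zero_or_pos (i : ℕ) with hi0 | hipos
      · rw [if_pos hi0, hi0, hc]
        constructor
        · intro hadj h
          rcases h with h | h
          · rw [Nat.mod_eq_of_lt (by omega)] at h
            have hc0 : c = 0 := by omega
            rw [hc0, hget0] at hadj
            exact hvx hadj
          · have hcn' : c = n := by
              rcases Nat.lt_or_ge (c + 2) (n + 2) with h' | h'
              · rw [Nat.mod_eq_of_lt h'] at h; omega
              · omega
            rw [hcn', hgetn] at hadj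
            exact hvy hadj
        · intro h
          have hc0 : c ≠ 0 := by
            intro h0
            exact h (Or.inl (by rw [Nat.mod_eq_of_lt (by omega)]; omega))
          have hcn' : c ≠ n := by
            intro h0
            apply h
            right
            have : c + 1 + 1 = n + 2 := by omega
            rw [this, Nat.mod_self]
          exact hAdjv c (by omega) (by omega)
      · have hi0' : ¬ ((i : ℕ) = 0) := by omega
        rw [if_neg hi0']
        obtain ⟨d, hd⟩ : ∃ d, (i : ℕ) = d + 1 := ⟨(i : ℕ) - 1, by omega⟩
        have hid : (i : ℕ) - 1 = d := by omega
        rw [hid, hd, hc]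
        have hdc : d < c := by omega
        constructor
        · intro hadj h
          rcases h with h | h
          · rw [Nat.mod_eq_of_lt (by omega)] at h
            have hc1 : c = d + 1 := by omega
            rw [hc1] at hadj
            exact hNadj d (by omega) hadj
          · rcases Nat.lt_or_ge (c + 1 + 1) (n + 2) with h' | h'
            · rw [Nat.mod_eq_of_lt h'] at h; omega
            · have hcn2 : c + 1 + 1 = n + 2 := by omega
              rw [hcn2, Nat.mod_self] at h
              omega
        · intro h
          have hc1 : c ≠ d + 1 := by
            intro h0
            exact h (Or.inl (by rw [Nat.mod_eq_of_lt (by omega)]; omega))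
          exact hGadj d c hcn (by omega)
    intro i j
    rcases lt_trichotomy (i : ℕ) (j : ℕ) with hij | hij | hij
    · exact main i j hij
    · have : i = j := Fin.ext hij
      subst this
      exact iff_of_false (G.irrefl) (((SimpleGraph.cycleGraph (n + 2))ᶜ).irrefl)
    · exact (G.adj_comm _ _).trans ((main j i hij).trans
        (((SimpleGraph.cycleGraph (n + 2))ᶜ).adj_comm _ _))
  -- injectivity
  have hinj : Function.Injective
      (fun i : Fin (n + 2) => (⟨_, hmem i⟩ : S)) := by
    intro i j h
    have h' : (if (i : ℕ) = 0 then v else P.getVert ((i : ℕ) - 1)) =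
        (if (j : ℕ) = 0 then v else P.getVert ((j : ℕ) - 1)) := congrArg Subtype.val h
    split_ifs at h' with h1 h2 h2
    · exact Fin.ext (by omega)
    · exact absurd (Walk.mem_support_iff_exists_getVert.2
        ⟨(j : ℕ) - 1, h'.symm, by have := j.isLt; omega⟩) hvsup
    · exact absurd (Walk.mem_support_iff_exists_getVert.2
        ⟨(i : ℕ) - 1, h', by have := i.isLt; omega⟩) hvsup
    · have := inj ((i : ℕ) - 1) ((j : ℕ) - 1)
        (by have := i.isLt; omega) (by have := j.isLt; omega) h'
      exact Fin.ext (by omega)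
  -- surjectivity
  have hsurj : Function.Surjective
      (fun i : Fin (n + 2) => (⟨_, hmem i⟩ : S)) := by
    rintro ⟨s, hs⟩
    rcases hs with hs | hs
    · refine ⟨⟨0, by omega⟩, ?_⟩
      exact Subtype.ext (by simpa using hs.symm)
    · obtain ⟨k, hk, hkn⟩ := Walk.mem_support_iff_exists_getVert.1 hs
      refine ⟨⟨k + 1, by omega⟩, ?_⟩
      exact Subtype.ext (by simpa using hk)
  exact ⟨(SimpleGraph.Iso.symm
    ⟨Equiv.ofBijective _ ⟨hinj, hsurj⟩, fun {a b} => by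
      simpa using key a b⟩)⟩
end
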